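/- Let ψ be a unit vector in the tensor product of two finite-dimensional complex Hilbert spaces (a matrix-indexed vector with index pairs (a,b), a ranging over Fin d₁ and b over Fin d₂), let ρ = ψψ† be the associated pure-state density matrix, and let ρ₁, ρ₂ be its partial traces over the second and first factor respectively. Then the trace norm of the realignment of ρ satisfies ‖R_ρ‖₁ = (Tr √ρ₁)·(Tr √ρ₂) = (Tr √ρ₁)². In particular, the CCNR negativity of a bipartite pure state equals its Rényi-1/2 entanglement entropy. -/

import Mathlib

open scoped ComplexOrder Matrix

noncomputable section

/-- The trace norm `‖M‖₁ = Tr√(MᴴM)` of a complex matrix. -/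
def traceNorm {m n : Type*} [Fintype m] [Fintype n] [DecidableEq n]
    (M : Matrix m n ℂ) : ℝ :=
  ((Matrix.posSemidef_conjTranspose_mul_self M).1.eigenvectorUnitary.1 *
    Matrix.diagonal (((↑) : ℝ → ℂ) ∘ Real.sqrt ∘ (Matrix.posSemidef_conjTranspose_mul_self M).1.eigenvalues) *
    (star (Matrix.posSemidef_conjTranspose_mul_self M).1.eigenvectorUnitary :
      Matrix n n ℂ)).trace.re

open scoped Classical in
/-- The positive semidefinite square root of a positive semidefinite matrix
(junk value `0` on other matrices). -/
def matSqrt {n : Type*} [Fintype n] [DecidableEq n] (M : Matrix n n ℂ) :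
    Matrix n n ℂ :=
  if h : M.PosSemidef then
    h.1.eigenvectorUnitary.1 * Matrix.diagonal (((↑) : ℝ → ℂ) ∘ Real.sqrt ∘ h.1.eigenvalues) *
      (star h.1.eigenvectorUnitary : Matrix n n ℂ)
  else 0

/-- The partial transpose on the second factor:
`M^{T₂}[(a,b),(c,d)] = M[(a,d),(c,b)]`. -/
def ptranspose {m p R : Type*} (M : Matrix (m × p) (m × p) R) :
    Matrix (m × p) (m × p) R :=
  fun c c' => M (c.1, c'.2) (c'.1, c.2)

/-- The realignment: `R_M[(a,c),(b,d)] = M[(a,b),(c,d)]`. -/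
def realign {m p : Type*} (M : Matrix (m × p) (m × p) ℂ) :
    Matrix (m × m) (p × p) ℂ :=
  fun x y => M (x.1, y.1) (x.2, y.2)

/-- The pure-state density matrix `ρ = ψψ†` of a bipartite state vector `ψ`. -/
def pureDensity {d₁ d₂ : ℕ} (ψ : Fin d₁ × Fin d₂ → ℂ) :
    Matrix (Fin d₁ × Fin d₂) (Fin d₁ × Fin d₂) ℂ :=
  fun i j => ψ i * (starRingEnd ℂ) (ψ j)

/-- The partial trace over the second factor: `ρ₁[a,c] = Σ_b M[(a,b),(c,b)]`. -/
def ptrace2 {d₁ d₂ : ℕ} (M : Matrix (Fin d₁ × Fin d₂) (Fin d₁ × Fin d₂) ℂ) :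
    Matrix (Fin d₁) (Fin d₁) ℂ :=
  fun a c => ∑ b, M (a, b) (c, b)

/-- The partial trace over the first factor: `ρ₂[b,d] = Σ_a M[(a,b),(a,d)]`. -/
def ptrace1 {d₁ d₂ : ℕ} (M : Matrix (Fin d₁ × Fin d₂) (Fin d₁ × Fin d₂) ℂ) :
    Matrix (Fin d₂) (Fin d₂) ℂ :=
  fun b d => ∑ a, M (a, b) (a, d)

end

/-! Write `ψ` as its `d₁ × d₂` coefficient matrix `A`. Then `R_ρ = A ⊗ Ā`, so
`‖R_ρ‖₁ = ‖A‖₁ ‖Ā‖₁ = ‖A‖₁²`, while `ρ₁ = AAᴴ` and `ρ₂ = (AᴴA)ᵀ`. Finally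
`Tr √(AAᴴ) = Tr √(AᴴA) = ‖A‖₁`, because `√(AAᴴ) = A (AᴴA)^{-1/2} Aᴴ` with the pseudo-inverse
square root, and cycling the trace turns this into `Tr ((AᴴA)^{-1/2} AᴴA) = Tr √(AᴴA)`. -/

open scoped Kronecker MatrixOrder
open Matrix

namespace Matrix

variable {𝕜 m n : Type*} [RCLike 𝕜] [Fintype m] [Fintype n] [DecidableEq n]

lemma continuousOn_spectrum_real (A : Matrix n n 𝕜) (f : ℝ → ℝ) :
    ContinuousOn f (spectrum ℝ A) :=
  A.finite_real_spectrum.continuousOn f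

lemma cfc_inv_sqrt_mul_self {h : Matrix n n 𝕜} (hh : IsSelfAdjoint h) :
    cfc (fun x => (√x)⁻¹) h * h = cfc Real.sqrt h := by
  nth_rw 2 [← cfc_id' ℝ h]
  rw [← cfc_mul _ _ h (continuousOn_spectrum_real h _) (continuousOn_spectrum_real h _)]
  simp only [← div_eq_inv_mul, Real.div_sqrt]

lemma self_mul_cfc_sqrt_mul_inv_sqrt {h : Matrix n n 𝕜} (hh : 0 ≤ h) :
    h * cfc (fun x => √x * (√x)⁻¹) h = h := by
  nth_rw 1 [← cfc_id' ℝ h]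
  rw [← cfc_mul _ _ h (continuousOn_spectrum_real h _) (continuousOn_spectrum_real h _)]
  nth_rw 2 [← cfc_id' ℝ h]
  refine cfc_congr fun x hx => ?_
  rcases (spectrum_nonneg_of_nonneg hh hx).eq_or_lt with rfl | hx_pos
  · simp
  · simp [(Real.sqrt_pos.mpr hx_pos).ne']

lemma mul_cfc_sqrt_mul_inv_sqrt_conjTranspose_mul_self (A : Matrix m n 𝕜) :
    A * cfc (fun x => √x * (√x)⁻¹) (Aᴴ * A) = A := by
  have h : (A * (1 - cfc (fun x => √x * (√x)⁻¹) (Aᴴ * A)))ᴴ *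
      (A * (1 - cfc (fun x => √x * (√x)⁻¹) (Aᴴ * A))) = 0 := by
    rw [conjTranspose_mul, Matrix.mul_assoc, ← Matrix.mul_assoc Aᴴ, Matrix.mul_sub,
      Matrix.mul_one, self_mul_cfc_sqrt_mul_inv_sqrt (posSemidef_conjTranspose_mul_self A).nonneg,
      sub_self, Matrix.mul_zero]
  rwa [conjTranspose_mul_self_eq_zero, Matrix.mul_sub, Matrix.mul_one, sub_eq_zero, eq_comm] at h

-- `(√0)⁻¹ = 0`, so `cfc (fun x => (√x)⁻¹)` is the pseudo-inverse square root.
lemma cfcSqrt_mul_conjTranspose [DecidableEq m] (A : Matrix m n 𝕜) :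
    CFC.sqrt (A * Aᴴ) = A * cfc (fun x => (√x)⁻¹) (Aᴴ * A) * Aᴴ := by
  set h := Aᴴ * A
  have hh : 0 ≤ h := (posSemidef_conjTranspose_mul_self A).nonneg
  set C := cfc (fun x => (√x)⁻¹) h
  have hC : 0 ≤ C := cfc_nonneg fun x _ => inv_nonneg.mpr (Real.sqrt_nonneg x)
  have hChC : C * h * C = cfc (fun x => √x * (√x)⁻¹) h := by
    rw [cfc_inv_sqrt_mul_self hh.isSelfAdjoint,
      cfc_mul _ _ h (continuousOn_spectrum_real h _) (continuousOn_spectrum_real h _)]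
  refine CFC.sqrt_unique ?_ (hC.posSemidef.mul_mul_conjTranspose_same A).nonneg
  calc A * C * Aᴴ * (A * C * Aᴴ) = A * (C * h * C) * Aᴴ := by simp only [h, Matrix.mul_assoc]
    _ = A * Aᴴ := by rw [hChC, mul_cfc_sqrt_mul_inv_sqrt_conjTranspose_mul_self]

lemma trace_cfcSqrt_mul_conjTranspose [DecidableEq m] (A : Matrix m n 𝕜) :
    (CFC.sqrt (A * Aᴴ)).trace = (CFC.sqrt (Aᴴ * A)).trace := by
  have hh : 0 ≤ Aᴴ * A := (posSemidef_conjTranspose_mul_self A).nonneg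
  rw [cfcSqrt_mul_conjTranspose, trace_mul_cycle, trace_mul_comm,
    cfc_inv_sqrt_mul_self hh.isSelfAdjoint, CFC.sqrt_eq_real_sqrt _ hh,
    cfcₙ_eq_cfc (hf0 := Real.sqrt_zero)]

lemma cfcSqrt_kronecker [DecidableEq m] {A : Matrix m m 𝕜} {B : Matrix n n 𝕜}
    (hA : 0 ≤ A) (hB : 0 ≤ B) : CFC.sqrt (A ⊗ₖ B) = CFC.sqrt A ⊗ₖ CFC.sqrt B :=
  CFC.sqrt_unique
    (by rw [← mul_kronecker_mul, CFC.sqrt_mul_sqrt_self A, CFC.sqrt_mul_sqrt_self B])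
    ((CFC.sqrt_nonneg A).posSemidef.kronecker (CFC.sqrt_nonneg B).posSemidef).nonneg

lemma cfcSqrt_transpose {A : Matrix n n 𝕜} (hA : 0 ≤ A) : CFC.sqrt Aᵀ = (CFC.sqrt A)ᵀ :=
  CFC.sqrt_unique (by rw [← transpose_mul, CFC.sqrt_mul_sqrt_self A])
    (CFC.sqrt_nonneg A).posSemidef.transpose.nonneg

omit [Fintype n] [DecidableEq n] in
lemma map_star_conjTranspose_mul_self (A : Matrix m n 𝕜) :
    (A.map star)ᴴ * A.map star = (Aᴴ * A)ᵀ := by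
  ext i j
  simp [mul_apply, mul_comm]

omit [DecidableEq n] in
lemma IsHermitian.ofReal_re_trace {A : Matrix n n ℂ} (hA : A.IsHermitian) :
    (A.trace.re : ℂ) = A.trace :=
  Complex.conj_eq_iff_re.mp ((trace_conjTranspose A).symm.trans (congrArg trace hA))

lemma PosSemidef.matSqrt_eq_cfcSqrt {M : Matrix n n ℂ} (hM : M.PosSemidef) :
    matSqrt M = CFC.sqrt M := by
  rw [matSqrt, dif_pos hM, CFC.sqrt_eq_real_sqrt _ hM.nonneg, cfcₙ_eq_cfc (hf0 := Real.sqrt_zero),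
    hM.1.cfc_eq, IsHermitian.cfc, Unitary.conjStarAlgAut_apply]
  rfl

end Matrix

section TraceNorm

variable {m n : Type*} [Fintype m] [Fintype n] [DecidableEq n]

lemma traceNorm_eq_re_trace_matSqrt (M : Matrix m n ℂ) :
    traceNorm M = (matSqrt (Mᴴ * M)).trace.re := by
  rw [matSqrt, dif_pos (posSemidef_conjTranspose_mul_self M)]
  rfl

lemma traceNorm_eq_trace_cfcSqrt (M : Matrix m n ℂ) :
    (traceNorm M : ℂ) = (CFC.sqrt (Mᴴ * M)).trace := by
  rw [traceNorm_eq_re_trace_matSqrt, (posSemidef_conjTranspose_mul_self M).matSqrt_eq_cfcSqrt]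
  exact (CFC.sqrt_nonneg _).posSemidef.1.ofReal_re_trace

lemma traceNorm_kronecker {m' n' : Type*} [Fintype m'] [Fintype n'] [DecidableEq n']
    (A : Matrix m n ℂ) (B : Matrix m' n' ℂ) :
    traceNorm (A ⊗ₖ B) = traceNorm A * traceNorm B := by
  have h : (traceNorm (A ⊗ₖ B) : ℂ) = traceNorm A * traceNorm B := by
    rw [traceNorm_eq_trace_cfcSqrt, conjTranspose_kronecker, ← mul_kronecker_mul,
      cfcSqrt_kronecker (posSemidef_conjTranspose_mul_self A).nonneg
        (posSemidef_conjTranspose_mul_self B).nonneg,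
      trace_kronecker, traceNorm_eq_trace_cfcSqrt, traceNorm_eq_trace_cfcSqrt]
  exact_mod_cast h

lemma traceNorm_map_star (A : Matrix m n ℂ) : traceNorm (A.map star) = traceNorm A := by
  have h : (traceNorm (A.map star) : ℂ) = traceNorm A := by
    rw [traceNorm_eq_trace_cfcSqrt, map_star_conjTranspose_mul_self,
      cfcSqrt_transpose (posSemidef_conjTranspose_mul_self A).nonneg, trace_transpose,
      traceNorm_eq_trace_cfcSqrt]
  exact_mod_cast h

end TraceNorm

section PureState

variable {d₁ d₂ : ℕ} (ψ : Fin d₁ × Fin d₂ → ℂ)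

lemma realign_pureDensity :
    realign (pureDensity ψ) = of (Function.curry ψ) ⊗ₖ (of (Function.curry ψ)).map star :=
  rfl

lemma ptrace2_pureDensity :
    ptrace2 (pureDensity ψ) = of (Function.curry ψ) * (of (Function.curry ψ))ᴴ :=
  rfl

lemma ptrace1_pureDensity :
    ptrace1 (pureDensity ψ) = ((of (Function.curry ψ))ᴴ * of (Function.curry ψ))ᵀ := by
  ext b d
  simp [ptrace1, pureDensity, mul_apply, mul_comm]

end PureState

theorem traceNorm_realign_pure_general {d₁ d₂ : ℕ} (ψ : Fin d₁ × Fin d₂ → ℂ) :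
    (traceNorm (realign (pureDensity ψ)) : ℂ) =
      (matSqrt (ptrace2 (pureDensity ψ))).trace *
        (matSqrt (ptrace1 (pureDensity ψ))).trace ∧
    (traceNorm (realign (pureDensity ψ)) : ℂ) =
      (matSqrt (ptrace2 (pureDensity ψ))).trace ^ 2 := by
  set A := of (Function.curry ψ)
  have hA := posSemidef_conjTranspose_mul_self A
  have h₁ : (matSqrt (ptrace2 (pureDensity ψ))).trace = traceNorm A := by
    rw [ptrace2_pureDensity, (posSemidef_self_mul_conjTranspose A).matSqrt_eq_cfcSqrt,
      trace_cfcSqrt_mul_conjTranspose, traceNorm_eq_trace_cfcSqrt]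
  have h₂ : (matSqrt (ptrace1 (pureDensity ψ))).trace = traceNorm A := by
    rw [ptrace1_pureDensity, hA.transpose.matSqrt_eq_cfcSqrt, cfcSqrt_transpose hA.nonneg,
      trace_transpose, traceNorm_eq_trace_cfcSqrt]
  rw [realign_pureDensity, traceNorm_kronecker, traceNorm_map_star, h₁, h₂]
  push_cast
  exact ⟨rfl, (sq _).symm⟩

/-- For a bipartite pure state `ρ = ψψ†`, the trace norm of the realignment satisfies
`‖R_ρ‖₁ = (Tr √ρ₁)·(Tr √ρ₂) = (Tr √ρ₁)²`: the CCNR negativity of a pure state is its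
Rényi-1/2 entanglement entropy. -/
theorem traceNorm_realign_pure {d₁ d₂ : ℕ} (ψ : Fin d₁ × Fin d₂ → ℂ)
    (hψ : ∑ i, Complex.normSq (ψ i) = 1) :
    (traceNorm (realign (pureDensity ψ)) : ℂ) =
      (matSqrt (ptrace2 (pureDensity ψ))).trace *
        (matSqrt (ptrace1 (pureDensity ψ))).trace ∧
    (traceNorm (realign (pureDensity ψ)) : ℂ) =
      (matSqrt (ptrace2 (pureDensity ψ))).trace ^ 2 :=
  traceNorm_realign_pure_general ψ
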